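/- Let q = q(n) ∈ (0,1) with q = o(1), let s_a ∈ (0,1] be a constant, let m = m(n) be a sequence of positive integers with m q s_a² ≥ (1+ε) log n for a constant ε > 0, and let Δ_x ≥ 1 be a constant. Set x = Δ_x m q s_a² / log(1/q). If X_n is a Binomial(m, q s_a²) random variable, then n · P(X_n ≤ x) → 0 as n → ∞. -/

import Mathlib

open MeasureTheory ProbabilityTheory Filter

noncomputable section

namespace AttrAlign

/-- The law of a `Binomial(m, r)` random variable, as a measure on `ℕ`
(the success probability `r` is clamped to `[0,1]`). -/
def binomMeasure (m : ℕ) (r : ℝ) : Measure ℕ :=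
  ((PMF.binomial (min (Real.toNNReal r) 1) (min_le_right _ _) m).map
    (fun k => (k : ℕ))).toMeasure

end AttrAlign

open AttrAlign

/-!
Since `q → 0`, eventually `r = q s_a² ≤ 1`, so that `binomMeasure m r` is Mathlib's `Bin(m, r)`.
Chernoff's bound for the lower tail of `X ∼ Bin(m, r)` with mean `μ = m r` reads, for `t ≥ 0`,
`P(X ≤ x) ≤ e^{t x} (r e^{-t} + 1 - r)^m ≤ exp(t x - μ (1 - e^{-t}))`.
With `L = log(1/q) → ∞`, `e^t = L` and `x = Δ_x μ / L` the exponent is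
`-μ (1 - (Δ_x log L + 1) / L) = -μ (1 - o(1))`, so since `μ ≥ (1 + ε) log n`,
eventually `n P(X ≤ x) ≤ n^{-ε/2}`.
-/

open Real
open scoped unitInterval

set_option linter.deprecated false in
theorem binomMeasure_eq_binomial (m : ℕ) (p : I) : binomMeasure m p = binomial m p := by
  have hp : ((min (Real.toNNReal p) 1 : NNReal) : ℝ) = p := by
    rw [min_eq_left (Real.toNNReal_le_one.mpr p.2.2), Real.coe_toNNReal _ p.2.1]
  refine Measure.ext_of_singleton fun k => ?_
  -- `(k : ℕ)` in `binomMeasure` elaborates to a coercion of the PMF along `Fin.val`.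
  change (PMF.map id (PMF.map Fin.val _)).toMeasure {k} = _
  rw [PMF.map_id, binomial_singleton, PMF.toMeasure_map_apply _ _ _ (measurable_of_countable _)
    (measurableSet_singleton k)]
  rcases le_or_gt k m with hk | hk
  · have : Fin.val ⁻¹' {k} = {Fin.ofNat (m + 1) k} := by
      ext i; simp [Fin.ext_iff, Nat.mod_eq_of_lt (Nat.lt_succ_of_le hk)]
    rw [this, PMF.toMeasure_apply_singleton _ _ (measurableSet_singleton _),
      ← PMF.binomial_apply_of_le hk, hp]
  · have : Fin.val ⁻¹' {k} = (∅ : Set (Fin (m + 1))) := by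
      ext i
      simp only [Set.mem_preimage, Set.mem_singleton_iff, Set.mem_empty_iff_false, iff_false]
      omega
    rw [this, measure_empty, Nat.choose_eq_zero_of_lt hk, Nat.cast_zero, zero_mul, zero_mul,
      ENNReal.ofReal_zero]

theorem mgf_binomial (n : ℕ) (p : I) (t : ℝ) :
    mgf (fun k : ℕ => (k : ℝ)) (binomial n p) t = (p * exp t + (1 - p)) ^ n := by
  rw [mgf, integral_binomial, add_pow, ← Nat.range_succ_eq_Iic]
  refine Finset.sum_congr rfl fun k _ => ?_
  rw [smul_eq_mul, mul_pow, ← exp_nat_mul, mul_comm (k : ℝ) t]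
  ring

theorem binomial_real_le_le_exp_mul (n : ℕ) (p : I) {t : ℝ} (ht : 0 ≤ t) (x : ℝ) :
    (binomial n p).real {k | (k : ℝ) ≤ x} ≤ exp (t * x) * (p * exp (-t) + (1 - p)) ^ n := by
  have h := measure_le_le_exp_mul_mgf (X := fun k : ℕ => (k : ℝ)) (μ := binomial n p) x
    (neg_nonpos.mpr ht) (integrable_binomial _)
  rwa [mgf_binomial, neg_neg] at h

theorem binomial_real_le_le_exp (n : ℕ) (p : I) {t : ℝ} (ht : 0 ≤ t) (x : ℝ) :
    (binomial n p).real {k | (k : ℝ) ≤ x} ≤ exp (t * x - n * p * (1 - exp (-t))) := by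
  have hbase : p * exp (-t) + (1 - p) ≤ exp (-(p * (1 - exp (-t)))) := by
    linarith [add_one_le_exp (-(p * (1 - exp (-t))))]
  have hpow : (p * exp (-t) + (1 - p)) ^ n ≤ exp (-(n * p * (1 - exp (-t)))) := by
    calc (p * exp (-t) + (1 - p)) ^ n ≤ exp (-(p * (1 - exp (-t)))) ^ n := by
          gcongr
          nlinarith [mul_nonneg p.2.1 (exp_pos (-t)).le, p.2.2]
      _ = exp (-(n * p * (1 - exp (-t)))) := by rw [← exp_nat_mul]; ring_nf
  calc _ ≤ exp (t * x) * (p * exp (-t) + (1 - p)) ^ n := binomial_real_le_le_exp_mul n p ht x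
    _ ≤ exp (t * x) * exp (-(n * p * (1 - exp (-t)))) := by gcongr
    _ = _ := by rw [← exp_add]; ring_nf

theorem binomial_real_le_div_le_exp (n : ℕ) (p : I) (c : ℝ) {L : ℝ} (hL : 1 ≤ L) :
    (binomial n p).real {k | (k : ℝ) ≤ c * (n * p) / L} ≤
      exp (-(n * p * (1 - (c * (log L / L) + L⁻¹)))) := by
  have hL0 : 0 < L := by linarith
  convert binomial_real_le_le_exp n p (log_nonneg hL) (c * (n * p) / L) using 2
  rw [exp_neg, exp_log hL0]
  field_simp
  ring

theorem tendsto_natCast_mul_exp_neg_of_log_le {ε : ℝ} (hε : 0 < ε) {μ δ : ℕ → ℝ}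
    (hδ : Tendsto δ atTop (nhds 0))
    (hμ : ∀ᶠ n : ℕ in atTop, (1 + ε) * log (n : ℝ) ≤ μ n) :
    Tendsto (fun n : ℕ => (n : ℝ) * exp (-(μ n * (1 - δ n)))) atTop (nhds 0) := by
  have hδε : ∀ᶠ n in atTop, (1 + ε) * δ n ≤ ε / 2 := by
    have := hδ.const_mul (1 + ε)
    rw [mul_zero] at this
    exact this.eventually (ge_mem_nhds (by positivity))
  have hpow : Tendsto (fun n : ℕ => (n : ℝ) ^ (-(ε / 2))) atTop (nhds 0) :=
    (tendsto_rpow_neg_atTop (by positivity)).comp tendsto_natCast_atTop_atTop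
  refine tendsto_of_tendsto_of_tendsto_of_le_of_le' tendsto_const_nhds hpow
    (.of_forall fun n => by positivity) ?_
  filter_upwards [hδε, hμ, eventually_ge_atTop 1] with n hδn hμn hn
  have hn0 : (0 : ℝ) < n := by exact_mod_cast hn
  have hlog : 0 ≤ log n := log_nonneg (by exact_mod_cast hn)
  have hδ1 : 0 ≤ 1 - δ n := by nlinarith
  have key : log n - μ n * (1 - δ n) ≤ log n * (-(ε / 2)) := by
    nlinarith [mul_le_mul_of_nonneg_right hμn hδ1, mul_nonneg hlog (sub_nonneg.mpr hδn)]
  calc (n : ℝ) * exp (-(μ n * (1 - δ n))) = exp (log n - μ n * (1 - δ n)) := by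
        rw [sub_eq_add_neg (log _), exp_add, exp_log hn0]
    _ ≤ (n : ℝ) ^ (-(ε / 2)) := by rw [rpow_def_of_pos hn0]; exact exp_le_exp.mpr key

theorem binomial_lower_tail_attrRich
    (q : ℕ → ℝ) (m : ℕ → ℕ) (sa ε Δx : ℝ)
    (hq01 : ∀ n, 0 < q n ∧ q n < 1)
    (hq : Tendsto q atTop (nhds 0))
    (hε : 0 < ε)
    (hmean : ∀ᶠ n : ℕ in atTop, (1 + ε) * Real.log n ≤ (m n : ℝ) * q n * sa ^ 2) :
    Tendsto (fun n : ℕ => (n : ℝ) *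
        (binomMeasure (m n) (q n * sa ^ 2)
          {k : ℕ | (k : ℝ) ≤ Δx * ((m n : ℝ) * q n * sa ^ 2) / Real.log (1 / q n)}).toReal)
      atTop (nhds 0) := by
  set L : ℕ → ℝ := fun n => log (1 / q n)
  have hL : Tendsto L atTop atTop := by
    refine tendsto_log_atTop.comp ?_
    simp only [one_div]
    exact (tendsto_nhdsWithin_of_tendsto_nhds_of_eventually_within q hq
      (.of_forall fun n => (hq01 n).1)).inv_tendsto_nhdsGT_zero
  have hδ : Tendsto (fun n => Δx * (log (L n) / L n) + (L n)⁻¹) atTop (nhds 0) := by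
    simpa using ((isLittleO_log_id_atTop.tendsto_div_nhds_zero.comp hL).const_mul Δx).add
      (tendsto_inv_atTop_zero.comp hL)
  have hr : Tendsto (fun n => q n * sa ^ 2) atTop (nhds 0) := by
    simpa using hq.mul_const (sa ^ 2)
  simp only [mul_assoc] at hmean ⊢
  refine tendsto_of_tendsto_of_tendsto_of_le_of_le' tendsto_const_nhds
    (tendsto_natCast_mul_exp_neg_of_log_le hε hδ hmean) (.of_forall fun n => by positivity) ?_
  filter_upwards [hr.eventually (ge_mem_nhds one_pos), hL.eventually_ge_atTop 1]
    with n hr1 hL1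
  have hr0 : 0 ≤ q n * sa ^ 2 := by have := (hq01 n).1; positivity
  gcongr
  have := binomial_real_le_div_le_exp (m n) ⟨q n * sa ^ 2, hr0, hr1⟩ Δx hL1
  rwa [← binomMeasure_eq_binomial] at this
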